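/- Define g_ℓ(u) = u_ℓ^3 * sum_{k=0}^{n-2} (-1)^k (k+1)/(k+3) u_ℓ^k S_{n,n-2-k}(u) for ℓ = 1,...,n-1, and let T(u) = (-u_1, u_2-u_1,...,u_{n-1}-u_1). Then g_2(T u) = g_2(u) - g_1(u) as polynomials, i.e., g satisfies the T-equivariance condition in its second coordinate. -/
import Mathlib

open Polynomial Finset

/-- The degree-`k` elementary symmetric function of `N` variables. -/
def esymmF {R : Type*} [CommRing R] (N k : ℕ) (u : Fin N → R) : R :=
  ∑ s ∈ Finset.powersetCard k (Finset.univ : Finset (Fin N)), ∏ i ∈ s, u i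

noncomputable def Pp (N : ℕ) (v : Fin N → ℂ) : Polynomial ℂ :=
  ∏ i, (X - C (v i))

noncomputable def Jp (N : ℕ) (v : Fin N → ℂ) : Polynomial ℂ :=
  ∑ j ∈ Finset.range (N + 1),
    C ((-1 : ℂ) ^ (N - j) * esymmF N (N - j) v * 2 / ((j : ℂ) + 2)) * X ^ (j + 2)

noncomputable def Bp (N : ℕ) (v : Fin N → ℂ) : Polynomial ℂ :=
  ∑ k ∈ Finset.range N,
    C ((-1 : ℂ) ^ k * ((k : ℂ) + 1) / ((k : ℂ) + 3) * esymmF N (N - 1 - k) v) * X ^ (k + 3)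

lemma esymmF_eq (N k : ℕ) (v : Fin N → ℂ) :
    ((Finset.univ : Finset (Fin N)).val.map v).esymm k = esymmF N k v := by
  rw [Finset.esymm_map_val]
  rfl

lemma Pp_expand (N : ℕ) (v : Fin N → ℂ) :
    Pp N v = ∑ j ∈ Finset.range (N + 1),
      C ((-1 : ℂ) ^ (N - j) * esymmF N (N - j) v) * X ^ j := by
  have h := Multiset.prod_X_sub_X_eq_sum_esymm ((Finset.univ : Finset (Fin N)).val.map v)
  have hcard : Multiset.card ((Finset.univ : Finset (Fin N)).val.map v) = N := by simp
  rw [Multiset.map_map, hcard] at h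
  have hP : Pp N v = ((Finset.univ : Finset (Fin N)).val.map
      ((fun t => X - C t) ∘ v)).prod := by
    rw [Pp, Finset.prod_eq_multiset_prod]; rfl
  rw [hP, h, ← Finset.sum_range_reflect]
  refine Finset.sum_congr rfl fun j hj => ?_
  rw [Finset.mem_range] at hj
  rw [show N + 1 - 1 - j = N - j from by omega, esymmF_eq,
    show N - (N - j) = j from by omega]
  rw [map_mul, map_pow, map_neg, map_one, mul_assoc]

lemma Jp_deriv (N : ℕ) (v : Fin N → ℂ) :
    derivative (Jp N v) = 2 * X * Pp N v := by
  rw [Jp, Pp_expand, derivative_sum, Finset.mul_sum]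
  refine Finset.sum_congr rfl fun j hj => ?_
  rw [derivative_C_mul_X_pow]
  have h2 : ((j : ℂ) + 2) ≠ 0 := by
    have h := Nat.cast_ne_zero (R := ℂ) |>.2 (show j + 2 ≠ 0 by omega)
    push_cast at h; exact h
  have : (-1 : ℂ) ^ (N - j) * esymmF N (N - j) v * 2 / ((j : ℂ) + 2) * ((j + 2 : ℕ) : ℂ)
      = 2 * ((-1 : ℂ) ^ (N - j) * esymmF N (N - j) v) := by
    push_cast
    field_simp
  rw [this, show j + 2 - 1 = j + 1 from rfl, map_mul,
    show (2 : ℂ[X]) = C 2 from (map_ofNat C 2).symm, pow_succ]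
  ring

lemma Jp_coeff_zero (N : ℕ) (v : Fin N → ℂ) : (Jp N v).coeff 0 = 0 := by
  rw [Jp, finset_sum_coeff]
  refine Finset.sum_eq_zero fun j hj => ?_
  rw [coeff_C_mul, coeff_X_pow]
  simp

lemma Bp_deriv (N : ℕ) (v : Fin N → ℂ) :
    derivative (Bp N v) = ∑ k ∈ Finset.range N,
      C ((-1 : ℂ) ^ k * ((k : ℂ) + 1) * esymmF N (N - 1 - k) v) * X ^ (k + 2) := by
  rw [Bp, derivative_sum]
  refine Finset.sum_congr rfl fun k hk => ?_
  rw [derivative_C_mul_X_pow]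
  have h3 : ((k : ℂ) + 3) ≠ 0 := by
    have h := Nat.cast_ne_zero (R := ℂ) |>.2 (show k + 3 ≠ 0 by omega)
    push_cast at h; exact h
  congr 1
  push_cast
  field_simp

lemma Pp_deriv2 (N : ℕ) (v : Fin N → ℂ) :
    - (X ^ 2 * derivative (Pp N v)) = ∑ k ∈ Finset.range N,
      C ((-1 : ℂ) ^ (N - k) * ((k : ℂ) + 1) * esymmF N (N - 1 - k) v) * X ^ (k + 2) := by
  rw [Pp_expand, derivative_sum]
  simp only [derivative_C_mul_X_pow]
  rw [Finset.mul_sum, ← Finset.sum_neg_distrib, Finset.sum_range_succ']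
  simp only [Nat.cast_zero, mul_zero, map_zero, zero_mul, mul_zero, neg_zero, add_zero]
  refine Finset.sum_congr rfl fun k hk => ?_
  rw [Finset.mem_range] at hk
  have h1 : N - k = (N - (k + 1)) + 1 := by omega
  have h2 : N - (k + 1) = N - 1 - k := by omega
  rw [show k + 1 - 1 = k from rfl, h1, h2]
  simp only [map_mul, map_pow, map_neg, map_one, map_add, map_natCast]
  push_cast
  ring

lemma Pp_root (N : ℕ) (v : Fin N → ℂ) (ℓ : Fin N) : eval (v ℓ) (Pp N v) = 0 := by
  rw [Pp, eval_prod]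
  exact Finset.prod_eq_zero (Finset.mem_univ ℓ) (by simp)

lemma Bp_coeff_zero (N : ℕ) (v : Fin N → ℂ) : (Bp N v).coeff 0 = 0 := by
  rw [Bp, finset_sum_coeff]
  refine Finset.sum_eq_zero fun k hk => ?_
  rw [coeff_C_mul, coeff_X_pow]
  simp

lemma BP_deriv_sum (N : ℕ) (v : Fin N → ℂ) :
    C ((-1 : ℂ) ^ N) * derivative (Bp N v) = - (X ^ 2 * derivative (Pp N v)) := by
  rw [Bp_deriv, Pp_deriv2, Finset.mul_sum]
  refine Finset.sum_congr rfl fun k hk => ?_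
  rw [Finset.mem_range] at hk
  rw [← mul_assoc, ← map_mul]
  congr 2
  have hN : (-1 : ℂ) ^ N = (-1) ^ (N - k) * (-1) ^ k := by
    rw [← pow_add]; congr 1; omega
  have h2 : ((-1 : ℂ) ^ k) * ((-1 : ℂ) ^ k) = 1 := by
    rw [← pow_add, ← two_mul, pow_mul]; norm_num
  rw [hN]
  linear_combination (-1 : ℂ) ^ (N - k) * ((k : ℂ) + 1) * esymmF N (N - 1 - k) v * h2

lemma Jp_eq (N : ℕ) (v : Fin N → ℂ) :
    Jp N v = C ((-1 : ℂ) ^ N) * Bp N v + X ^ 2 * Pp N v := by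
  have hd : derivative (Jp N v - (C ((-1 : ℂ) ^ N) * Bp N v + X ^ 2 * Pp N v)) = 0 := by
    rw [derivative_sub, derivative_add, derivative_mul, derivative_mul, derivative_C,
      Jp_deriv, derivative_X_sq]
    have h0 : C ((-1 : ℂ) ^ N) * derivative (Bp N v) = - (X ^ 2 * derivative (Pp N v)) :=
      BP_deriv_sum N v
    rw [h0, show (C 2 : ℂ[X]) = 2 from map_ofNat C 2]
    ring
  have hc : (Jp N v - (C ((-1 : ℂ) ^ N) * Bp N v + X ^ 2 * Pp N v)).coeff 0 = 0 := by
    rw [coeff_sub, Jp_coeff_zero, coeff_add, coeff_C_mul, Bp_coeff_zero,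
      coeff_zero_eq_eval_zero]
    simp
  have h := eq_C_of_derivative_eq_zero hd
  rw [hc, map_zero] at h
  exact sub_eq_zero.mp h

lemma g_eq (N : ℕ) (v : Fin N → ℂ) (ℓ : Fin N) :
    v ℓ ^ 3 * ∑ k ∈ Finset.range N,
        (-1 : ℂ) ^ k * ((k : ℂ) + 1) / ((k : ℂ) + 3) * (v ℓ) ^ k * esymmF N (N - 1 - k) v
      = (-1 : ℂ) ^ N * eval (v ℓ) (Jp N v) := by
  have h1 : eval (v ℓ) (Jp N v) = (-1 : ℂ) ^ N * eval (v ℓ) (Bp N v) := by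
    rw [Jp_eq, eval_add, eval_mul, eval_mul, eval_C, eval_pow, eval_X, Pp_root,
      mul_zero, add_zero]
  have hsq : (-1 : ℂ) ^ N * (-1 : ℂ) ^ N = 1 := by
    rw [← pow_add, ← two_mul, pow_mul]; norm_num
  rw [h1, ← mul_assoc, hsq, one_mul, Bp, eval_finset_sum, Finset.mul_sum]
  refine Finset.sum_congr rfl fun k hk => ?_
  rw [eval_mul, eval_pow, eval_C, eval_X]
  ring

lemma keyprod (N : ℕ) (u : Fin N → ℂ) (i0 : Fin N) (T : Fin N → ℂ)
    (hT0 : T i0 = - u i0) (hT : ∀ j, j ≠ i0 → T j = u j - u i0) :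
    X * Pp N T = (X + C (u i0)) * (Pp N u).comp (X + C (u i0)) := by
  rw [Pp, Pp, Polynomial.prod_comp]
  simp only [sub_comp, X_comp, C_comp]
  rw [← Finset.mul_prod_erase _ _ (Finset.mem_univ i0),
    ← Finset.mul_prod_erase _ (fun j => X + C (u i0) - C (u j)) (Finset.mem_univ i0)]
  have hrest : ∏ j ∈ Finset.univ.erase i0, (X - C (T j))
      = ∏ j ∈ Finset.univ.erase i0, (X + C (u i0) - C (u j)) := by
    refine Finset.prod_congr rfl fun j hj => ?_
    rw [hT j (Finset.ne_of_mem_erase hj), C_sub]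
    ring
  rw [hrest, hT0, map_neg]
  ring

lemma keycomp (N : ℕ) (u : Fin N → ℂ) (i0 : Fin N) (T : Fin N → ℂ)
    (hT0 : T i0 = - u i0) (hT : ∀ j, j ≠ i0 → T j = u j - u i0) :
    Jp N T = (Jp N u).comp (X + C (u i0)) - C (eval (u i0) (Jp N u)) := by
  have hq := keyprod N u i0 T hT0 hT
  have hd : derivative (Jp N T - ((Jp N u).comp (X + C (u i0)) - C (eval (u i0) (Jp N u)))) = 0 := by
    rw [derivative_sub, derivative_sub, derivative_C, derivative_comp, derivative_add,
      derivative_X, derivative_C, Jp_deriv, Jp_deriv]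
    simp only [mul_comp, X_comp, C_comp, show (2 : ℂ[X]) = C 2 from (map_ofNat C 2).symm]
    linear_combination (C 2 : ℂ[X]) * hq
  have hc : (Jp N T - ((Jp N u).comp (X + C (u i0)) - C (eval (u i0) (Jp N u)))).coeff 0 = 0 := by
    rw [coeff_sub, Jp_coeff_zero, coeff_sub, coeff_zero_eq_eval_zero, eval_comp]
    simp
  have h := eq_C_of_derivative_eq_zero hd
  rw [hc, map_zero] at h
  exact sub_eq_zero.mp h

theorem stmt12 (n : ℕ) (hn : 3 ≤ n) (u : Fin (n - 1) → ℂ) :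
    let i0 : Fin (n - 1) := ⟨0, by omega⟩
    let i1 : Fin (n - 1) := ⟨1, by omega⟩
    let T : Fin (n - 1) → ℂ := fun j => if j = i0 then -u i0 else u j - u i0
    let g : Fin (n - 1) → (Fin (n - 1) → ℂ) → ℂ := fun ℓ v =>
      (v ℓ) ^ 3 * ∑ k ∈ Finset.range (n - 1),
        (-1 : ℂ) ^ k * ((k : ℂ) + 1) / ((k : ℂ) + 3) * (v ℓ) ^ k *
          esymmF (n - 1) (n - 2 - k) v
    g i1 T = g i1 u - g i0 u := by
  intro i0 i1 T g
  have hne : i1 ≠ i0 := by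
    intro h
    have h1 : (1 : ℕ) = 0 := congrArg Fin.val h
    exact one_ne_zero h1
  have hT0 : T i0 = - u i0 := if_pos rfl
  have hTj : ∀ j, j ≠ i0 → T j = u j - u i0 := fun j hj => if_neg hj
  have hidx : n - 2 = n - 1 - 1 := by omega
  have hg : ∀ (v : Fin (n - 1) → ℂ) (ℓ : Fin (n - 1)),
      g ℓ v = (-1 : ℂ) ^ (n - 1) * eval (v ℓ) (Jp (n - 1) v) := by
    intro v ℓ
    show (v ℓ) ^ 3 * ∑ k ∈ Finset.range (n - 1),
        (-1 : ℂ) ^ k * ((k : ℂ) + 1) / ((k : ℂ) + 3) * (v ℓ) ^ k *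
          esymmF (n - 1) (n - 2 - k) v = _
    rw [hidx]
    exact g_eq (n - 1) v ℓ
  rw [hg, hg, hg, keycomp (n - 1) u i0 T hT0 hTj]
  have hTi1 : T i1 = u i1 - u i0 := hTj i1 hne
  rw [hTi1]
  simp [eval_comp]
  ring
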